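/- Let G be the free group on two generators a and b, and for g ∈ G let λ_g be the unitary operator on the Hilbert space ℓ²(G) of square-summable complex functions on G given by (λ_g f)(x) = f(g⁻¹ x). Then the only f ∈ ℓ²(G) satisfying λ_a(λ_b f) = λ_b(λ_a f) is f = 0; that is, the commutator λ_a λ_b − λ_b λ_a has trivial kernel. -/

import Mathlib

open scoped ENNReal

theorem lpTranslate_mem {G : Type*} [Group G] (g : G) (f : lp (fun _ : G => ℂ) 2) :
    Memℓp (fun x : G => f (g⁻¹ * x)) 2 := by
  apply memℓp_gen
  have h : Summable fun x : G => ‖f x‖ ^ (2 : ℝ≥0∞).toReal :=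
    (memℓp_gen_iff (by norm_num)).1 (lp.memℓp f)
  have h2 := (Equiv.mulLeft g⁻¹).summable_iff.mpr h
  convert h2 using 2
  rfl

/-- Left translation `λ_g f = f (g⁻¹ ·)` on `ℓ²(G)`; it is a unitary operator. -/
noncomputable def lpTranslate {G : Type*} [Group G] (g : G)
    (f : lp (fun _ : G => ℂ) 2) : lp (fun _ : G => ℂ) 2 :=
  ⟨fun x => f (g⁻¹ * x), lpTranslate_mem g f⟩

/-- The homomorphism sending `a ↦ (x ↦ x + 1)` and `b ↦ (x ↦ -x)` on `ℤ`. -/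
noncomputable def auxHom : FreeGroup Bool →* Equiv.Perm ℤ :=
  FreeGroup.lift (fun i => if i then (Equiv.neg ℤ) else (Equiv.addLeft (1 : ℤ)))

lemma auxHom_comm_apply (x : ℤ) :
    auxHom ((FreeGroup.of true)⁻¹ * (FreeGroup.of false)⁻¹ *
      FreeGroup.of true * FreeGroup.of false) x = x + 2 := by
  simp only [auxHom, map_mul, map_inv, FreeGroup.lift_apply_of, if_true, if_false,
    Equiv.Perm.mul_apply]
  simp [Equiv.Perm.inv_def, Equiv.addLeft, Equiv.neg]
  ring

lemma comm_not_finOrder :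
    ¬ IsOfFinOrder ((FreeGroup.of true)⁻¹ * (FreeGroup.of false)⁻¹ *
      FreeGroup.of true * FreeGroup.of false) := by
  intro h
  have h2 : IsOfFinOrder (auxHom ((FreeGroup.of true)⁻¹ * (FreeGroup.of false)⁻¹ *
      FreeGroup.of true * FreeGroup.of false)) := auxHom.isOfFinOrder h
  obtain ⟨n, hn, hpow⟩ := (isOfFinOrder_iff_pow_eq_one).1 h2
  have key : ∀ m : ℕ, ((auxHom ((FreeGroup.of true)⁻¹ * (FreeGroup.of false)⁻¹ *
      FreeGroup.of true * FreeGroup.of false)) ^ m) 0 = 2 * m := by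
    intro m
    induction m with
    | zero => simp
    | succ k ih =>
      rw [pow_succ', Equiv.Perm.mul_apply, ih]
      rw [auxHom_comm_apply]
      push_cast; ring
  have := key n
  rw [hpow] at this
  simp at this
  omega

set_option maxHeartbeats 1000000 in
/-- On the free group `G` on two generators `a`, `b`, the only `f ∈ ℓ²(G)` with
`λ_a (λ_b f) = λ_b (λ_a f)` is `f = 0`; i.e. the commutator `λ_a λ_b − λ_b λ_a`
has trivial kernel. -/
theorem statement5 (a b : FreeGroup Bool)
    (ha : a = FreeGroup.of false) (hb : b = FreeGroup.of true)
    (f : lp (fun _ : FreeGroup Bool => ℂ) 2)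
    (hf : lpTranslate a (lpTranslate b f) = lpTranslate b (lpTranslate a f)) :
    f = 0 := by
  set g : FreeGroup Bool := b⁻¹ * a⁻¹ * b * a with hg
  -- invariance : f (g * y) = f y
  have hinv : ∀ y : FreeGroup Bool, f (g * y) = f y := by
    intro y
    have h1 := congrArg (fun v : lp (fun _ : FreeGroup Bool => ℂ) 2 => (v : ∀ _ : FreeGroup Bool, ℂ) (b * a * y)) hf
    simp only [lpTranslate] at h1
    have e1 : b⁻¹ * (a⁻¹ * (b * a * y)) = g * y := by rw [hg]; simp [mul_assoc]
    have e2 : a⁻¹ * (b⁻¹ * (b * a * y)) = y := by simp [mul_assoc]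
    rw [e1, e2] at h1
    exact h1
  have hinvn : ∀ (n : ℕ) (y : FreeGroup Bool), f (g ^ n * y) = f y := by
    intro n y
    induction n with
    | zero => simp
    | succ k ih =>
      rw [pow_succ', mul_assoc, hinv (g ^ k * y), ih]
  -- g has infinite order
  have hfin : ¬ IsOfFinOrder g := by
    rw [hg, ha, hb]
    exact comm_not_finOrder
  have hpowinj : Function.Injective fun n : ℕ => g ^ n :=
    injective_pow_iff_not_isOfFinOrder.mpr hfin
  -- summability
  have hsum' : Summable fun x : FreeGroup Bool => ‖f x‖ ^ (2 : ℝ≥0∞).toReal :=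
    (memℓp_gen_iff (by norm_num)).1 (lp.memℓp f)
  have hsum : Summable fun x : FreeGroup Bool => ‖f x‖ ^ (2 : ℝ) := by
    have : (2 : ℝ≥0∞).toReal = (2 : ℝ) := by norm_num
    rw [this] at hsum'
    exact hsum'
  have hzero : ∀ y : FreeGroup Bool, f y = 0 := by
    intro y
    have hinj : Function.Injective fun n : ℕ => g ^ n * y := by
      intro m n hmn
      simp only at hmn
      exact hpowinj (mul_right_cancel hmn)
    have hsub : Summable fun n : ℕ => ‖f (g ^ n * y)‖ ^ (2 : ℝ) :=
      hsum.comp_injective hinj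
    have hconst : (fun n : ℕ => ‖f (g ^ n * y)‖ ^ (2 : ℝ)) =
        fun _ : ℕ => ‖f y‖ ^ (2 : ℝ) := by
      funext n; rw [hinvn n y]
    rw [hconst] at hsub
    have := hsub.tendsto_atTop_zero
    have hlim : ‖f y‖ ^ (2 : ℝ) = 0 := tendsto_nhds_unique tendsto_const_nhds this
    have h2 : ‖f y‖ ^ (2 : ℕ) = 0 := by
      rw [← Real.rpow_natCast]; exact_mod_cast hlim
    have : ‖f y‖ = 0 := by
      have := sq_eq_zero_iff.mp h2
      simpa using this
    simpa using this
  ext x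
  simpa using hzero x
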